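/- There exists a constant C > 0 such that for every integer n ≥ 1 and every w ∈ ℂ, |Q_n(w)| ≤ exp(2·log²(|w|+1) + C) and |Q(w)| ≤ exp(2·log²(|w|+1) + C), where log denotes the natural logarithm. -/

import Mathlib

/-- The entire function `Q(w) = ∏_{j=1}^∞ (1 - w/2^j)`. -/
noncomputable def Q (w : ℂ) : ℂ :=
  ∏' j : ℕ, (1 - w / 2 ^ (j + 1))

/-- The entire function `Q_n(w) = ∏_{j ≥ 1, j ≠ n} (1 - w/2^j)`. -/
noncomputable def Qn (n : ℕ) (w : ℂ) : ℂ :=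
  ∏' j : ℕ, if j + 1 = n then 1 else (1 - w / 2 ^ (j + 1))

/-!
With `r = ‖w‖`, every factor satisfies `‖1 - w / 2 ^ j‖ ≤ 1 + r / 2 ^ j`. Take `N ≈ log₂ (r + 1)`,
so that `r + 1 ≤ 2 ^ N`. The first `N` factors are each at most `1 + r`, contributing
`(1 + r) ^ N = exp (N log (r + 1))`, and since `1 / log 2 < 3 / 2` this is at most
`exp (3/2 log² (r + 1) + log (r + 1))`. The remaining factors contribute at most
`exp (∑_{j > N} r / 2 ^ j) ≤ e`.
-/

open Finset Real

theorem norm_tprod_le_of_prod_norm_le {ι E : Type*} [SeminormedCommRing E] [NormMulClass E]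
    [NormOneClass E] {f : ι → E} {B : ℝ} (hB : 1 ≤ B) (h : ∀ s : Finset ι, ∏ i ∈ s, ‖f i‖ ≤ B) :
    ‖∏' i, f i‖ ≤ B := by
  by_cases hf : Multipliable f
  · rw [hf.norm_tprod]
    exact tprod_le_of_prod_le' hB h
  · rwa [tprod_eq_one_of_not_multipliable hf, norm_one]

theorem sum_range_div_two_pow_add_le {r : ℝ} (hr : 0 ≤ r) (N k : ℕ) :
    ∑ j ∈ range k, r / 2 ^ (N + j + 1) ≤ r / 2 ^ N := by
  calc ∑ j ∈ range k, r / 2 ^ (N + j + 1) = r / 2 ^ (N + 1) * ∑ j ∈ range k, (1 / 2 : ℝ) ^ j := by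
        rw [mul_sum]
        refine sum_congr rfl fun j _ => ?_
        rw [one_div_pow, pow_succ, pow_succ, pow_add]
        field_simp
    _ ≤ r / 2 ^ (N + 1) * 2 := by gcongr; exact sum_geometric_two_le k
    _ = r / 2 ^ N := by rw [pow_succ]; field_simp

theorem prod_range_one_add_div_two_pow_le {r : ℝ} (hr : 0 ≤ r) {N : ℕ} (hN : r ≤ 2 ^ N) (k : ℕ) :
    ∏ j ∈ range (N + k), (1 + r / 2 ^ (j + 1)) ≤ (1 + r) ^ N * exp 1 := by
  have head : ∏ j ∈ range N, (1 + r / 2 ^ (j + 1)) ≤ (1 + r) ^ N :=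
    calc ∏ j ∈ range N, (1 + r / 2 ^ (j + 1)) ≤ ∏ _j ∈ range N, (1 + r) := by
          gcongr with j
          exact div_le_self hr (one_le_pow₀ one_le_two)
      _ = (1 + r) ^ N := by rw [prod_const, card_range]
  have tail : ∏ j ∈ range k, (1 + r / 2 ^ (N + j + 1)) ≤ exp 1 :=
    calc ∏ j ∈ range k, (1 + r / 2 ^ (N + j + 1))
        ≤ exp (∑ j ∈ range k, r / 2 ^ (N + j + 1)) :=
          prod_one_add_le_exp_sum _ fun j => by positivity
      _ ≤ exp 1 := by
          gcongr
          exact (sum_range_div_two_pow_add_le hr N k).trans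
            ((div_le_one (by positivity)).2 hN)
  rw [prod_range_add]
  exact mul_le_mul head tail (prod_nonneg fun j _ => by positivity) (by positivity)

theorem exists_le_two_pow_of_one_le {x : ℝ} (hx : 1 ≤ x) :
    ∃ N : ℕ, x ≤ 2 ^ N ∧ (N : ℝ) ≤ logb 2 x + 1 := by
  refine ⟨⌈logb 2 x⌉₊, ?_, (Nat.ceil_lt_add_one (logb_nonneg one_lt_two hx)).le⟩
  calc x = 2 ^ logb 2 x := (rpow_logb two_pos (by norm_num) (by linarith)).symm
    _ ≤ 2 ^ (⌈logb 2 x⌉₊ : ℝ) := rpow_le_rpow_of_exponent_le one_le_two (Nat.le_ceil _)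
    _ = 2 ^ ⌈logb 2 x⌉₊ := rpow_natCast _ _

theorem prod_one_add_div_two_pow_le_exp {r : ℝ} (hr : 0 ≤ r) (s : Finset ℕ) :
    ∏ j ∈ s, (1 + r / 2 ^ (j + 1)) ≤ exp (2 * log (r + 1) ^ 2 + 2) := by
  set L := log (r + 1)
  have hL : 0 ≤ L := log_nonneg (by linarith)
  obtain ⟨N, hrN, hNL⟩ := exists_le_two_pow_of_one_le (x := r + 1) (by linarith)
  obtain ⟨k, hsk⟩ := exists_nat_subset_range s
  have hNL' : (N : ℝ) ≤ 3 / 2 * L + 1 := by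
    have : logb 2 (r + 1) ≤ 3 / 2 * L := by
      rw [logb, div_le_iff₀ (log_pos one_lt_two)]
      nlinarith [log_two_gt_d9]
    linarith
  calc ∏ j ∈ s, (1 + r / 2 ^ (j + 1)) ≤ ∏ j ∈ range (N + k), (1 + r / 2 ^ (j + 1)) :=
        prod_le_prod_of_subset_of_one_le (hsk.trans (range_subset_range.2 (by omega)))
          (fun j _ => by positivity) fun j _ _ => le_add_of_nonneg_right (by positivity)
    _ ≤ (1 + r) ^ N * exp 1 := prod_range_one_add_div_two_pow_le hr (by linarith) k
    _ = exp (N * L + 1) := by rw [exp_add, exp_nat_mul, add_comm 1 r, exp_log (by linarith)]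
    _ ≤ exp (2 * L ^ 2 + 2) :=
        exp_le_exp.2 (by nlinarith [mul_le_mul_of_nonneg_right hNL' hL, sq_nonneg (L - 1)])

theorem norm_tprod_le_exp_log_sq {f : ℕ → ℂ} {r : ℝ} (hr : 0 ≤ r)
    (hf : ∀ j, ‖f j‖ ≤ 1 + r / 2 ^ (j + 1)) :
    ‖∏' j, f j‖ ≤ exp (2 * log (r + 1) ^ 2 + 2) :=
  norm_tprod_le_of_prod_norm_le (one_le_exp (by positivity)) fun s =>
    (prod_le_prod (fun j _ => norm_nonneg _) fun j _ => hf j).trans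
      (prod_one_add_div_two_pow_le_exp hr s)

theorem norm_one_sub_div_two_pow_le (w : ℂ) (j : ℕ) :
    ‖1 - w / 2 ^ (j + 1)‖ ≤ 1 + ‖w‖ / 2 ^ (j + 1) := by
  refine (norm_sub_le _ _).trans_eq ?_
  simp

theorem Q_and_Qn_growth_bound :
    ∃ C : ℝ, 0 < C ∧ ∀ n : ℕ, 1 ≤ n → ∀ w : ℂ,
      ‖Qn n w‖ ≤ Real.exp (2 * Real.log (‖w‖ + 1) ^ 2 + C) ∧
      ‖Q w‖ ≤ Real.exp (2 * Real.log (‖w‖ + 1) ^ 2 + C) := by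
  refine ⟨2, two_pos, fun n _ w => ⟨norm_tprod_le_exp_log_sq (norm_nonneg w) fun j => ?_,
    norm_tprod_le_exp_log_sq (norm_nonneg w) (norm_one_sub_div_two_pow_le w)⟩⟩
  split_ifs
  · rw [norm_one]
    exact le_add_of_nonneg_right (by positivity)
  · exact norm_one_sub_div_two_pow_le w j
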